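/- Let n ≥ 2 and let u : ℝⁿ\{0} → ℝ be a continuously differentiable 0-homogeneous function. Then the vector-valued identity ∫_{S^{n-1}} u(θ) θ dσ_{n-1}(θ) = (1/(n-1)) ∫_{S^{n-1}} ∇u(θ) dσ_{n-1}(θ) holds, where both sides are vectors in ℝⁿ and the integrals are taken coordinatewise. -/

import Mathlib

open MeasureTheory Real
open scoped RealInnerProductSpace

/-- The standard Gaussian measure on `ℝⁿ`. -/
noncomputable def stdGaussian (n : ℕ) : Measure (EuclideanSpace ℝ (Fin n)) :=
  volume.withDensity fun x =>
    ENNReal.ofReal ((2 * π) ^ (-(n : ℝ) / 2) * Real.exp (-‖x‖ ^ 2 / 2))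

/-- The uniform (rotation-invariant) probability measure on the unit sphere `S^{n-1}`,
realized as the image of the standard Gaussian measure under `x ↦ x/‖x‖`. -/
noncomputable def sphereUniform (n : ℕ) : Measure (EuclideanSpace ℝ (Fin n)) :=
  (stdGaussian n).map fun x => ‖x‖⁻¹ • x

/-!
Write `x = r • θ` in polar coordinates. Since `u` is 0-homogeneous, `∂ᵥu` is homogeneous of
degree `-1`. Integrating by parts against a radial cutoff `χ x = ρ ‖x‖` supported in an annulus,
`∫ χ ∂ᵥu = -∫ (∂ᵥχ) u` separates into
`(∫ r ^ (n-2) ρ) ∫_S ∂ᵥu = -(∫ r ^ (n-1) ρ') ∫_S u ⟪θ, v⟫`, and the one-dimensional integration by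
parts `∫ r ^ (n-1) ρ' = -(n-1) ∫ r ^ (n-2) ρ` gives `∫_S ∂ᵥu = (n-1) ∫_S u ⟪θ, v⟫` for the cone
measure `volume.toSphere`. The Gaussian image `sphereUniform n` is a constant multiple of that
measure, since the Gaussian density is radial.
-/

open Set Metric Module Filter Topology
open scoped ENNReal

theorem norm_smul_of_mem_sphere {E : Type*} [NormedAddCommGroup E] [NormedSpace ℝ E] {r : ℝ}
    (hr : 0 < r) (θ : sphere (0 : E) 1) : ‖r • (θ : E)‖ = r := by
  rw [norm_smul, norm_eq_of_mem_sphere θ, mul_one, Real.norm_of_nonneg hr.le]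

section PolarCoordinates

variable {E G : Type*} [NormedAddCommGroup E] [NormedSpace ℝ E] [Nontrivial E]
  [FiniteDimensional ℝ E] [MeasurableSpace E] [BorelSpace E] (μ : Measure E) [μ.IsAddHaarMeasure]
  [NormedAddCommGroup G] [NormedSpace ℝ G]

theorem lintegral_eq_lintegral_Ioi_mul_lintegral_toSphere {f : E → ℝ≥0∞} {ψ : ℝ → ℝ≥0∞}
    {g : sphere (0 : E) 1 → ℝ≥0∞} (hψ : Measurable ψ) (hg : Measurable g)
    (h : ∀ r : ℝ, 0 < r → ∀ θ : sphere (0 : E) 1, f (r • (θ : E)) = ψ r * g θ) :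
    ∫⁻ x, f x ∂μ =
      (∫⁻ r in Ioi (0 : ℝ), ENNReal.ofReal (r ^ (finrank ℝ E - 1)) * ψ r) *
        ∫⁻ θ, g θ ∂μ.toSphere := by
  calc ∫⁻ x, f x ∂μ = ∫⁻ x : ({0}ᶜ : Set E), f x ∂(μ.comap Subtype.val) := by
        rw [lintegral_subtype_comap (measurableSet_singleton _).compl, restrict_compl_singleton]
    _ = ∫⁻ p : sphere (0 : E) 1 × Ioi (0 : ℝ), g p.1 * ψ p.2
          ∂(μ.toSphere.prod (.volumeIoiPow (finrank ℝ E - 1))) := by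
        rw [← μ.measurePreserving_homeomorphUnitSphereProd.lintegral_comp_emb
          (Homeomorph.measurableEmbedding _)]
        refine lintegral_congr fun x => ?_
        have hx : (x : E) ≠ 0 := x.2
        have := h ‖(x : E)‖ (norm_pos_iff.2 hx) (homeomorphUnitSphereProd E x).1
        rw [homeomorphUnitSphereProd_apply_fst_coe, smul_inv_smul₀ (norm_ne_zero_iff.2 hx)] at this
        rw [this, mul_comm, homeomorphUnitSphereProd_apply_snd_coe]
    _ = _ := by
        rw [lintegral_prod_mul (f := g) (g := fun r : Ioi (0 : ℝ) => ψ r) hg.aemeasurable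
            (hψ.comp measurable_subtype_coe).aemeasurable,
          mul_comm, Measure.volumeIoiPow, lintegral_withDensity_eq_lintegral_mul _
            (measurable_subtype_coe.pow_const _).ennreal_ofReal (hψ.comp measurable_subtype_coe)
            (g := fun r : Ioi (0 : ℝ) => ψ r),
          ← lintegral_subtype_comap measurableSet_Ioi]
        rfl

theorem integral_eq_integral_Ioi_smul_integral_toSphere {f : E → G} {ψ : ℝ → ℝ}
    {g : sphere (0 : E) 1 → G}
    (h : ∀ r : ℝ, 0 < r → ∀ θ : sphere (0 : E) 1, f (r • (θ : E)) = ψ r • g θ) :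
    ∫ x, f x ∂μ = (∫ r in Ioi (0 : ℝ), r ^ (finrank ℝ E - 1) * ψ r) • ∫ θ, g θ ∂μ.toSphere := by
  calc ∫ x, f x ∂μ = ∫ x : ({0}ᶜ : Set E), f x ∂(μ.comap Subtype.val) := by
        rw [integral_subtype_comap (measurableSet_singleton _).compl, restrict_compl_singleton]
    _ = ∫ p : sphere (0 : E) 1 × Ioi (0 : ℝ), ψ p.2 • g p.1
          ∂(μ.toSphere.prod (.volumeIoiPow (finrank ℝ E - 1))) := by
        rw [← μ.measurePreserving_homeomorphUnitSphereProd.integral_comp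
          (Homeomorph.measurableEmbedding _)]
        refine integral_congr_ae (.of_forall fun x => ?_)
        have hx : (x : E) ≠ 0 := x.2
        have := h ‖(x : E)‖ (norm_pos_iff.2 hx) (homeomorphUnitSphereProd E x).1
        rw [homeomorphUnitSphereProd_apply_fst_coe, smul_inv_smul₀ (norm_ne_zero_iff.2 hx)] at this
        dsimp only
        rw [this, homeomorphUnitSphereProd_apply_snd_coe]
    _ = _ := by
        rw [← integral_prod_swap]
        simp only [Prod.fst_swap, Prod.snd_swap]
        rw [integral_prod_smul (fun r : Ioi (0 : ℝ) => ψ r) g]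
        simp only [Measure.volumeIoiPow, ENNReal.ofReal]
        rw [integral_withDensity_eq_integral_smul
          (measurable_subtype_coe.pow_const _).real_toNNReal,
          integral_subtype_comap measurableSet_Ioi (fun x : ℝ => (x ^ _).toNNReal • ψ x)]
        congr 1
        refine setIntegral_congr_fun measurableSet_Ioi fun x hx => ?_
        rw [NNReal.smul_def, Real.coe_toNNReal _ (pow_nonneg hx.out.le _), smul_eq_mul]

theorem map_inv_norm_smul_withDensity_comp_norm {ψ : ℝ → ℝ≥0∞} (hψ : Measurable ψ) :
    (μ.withDensity fun x => ψ ‖x‖).map (fun x => ‖x‖⁻¹ • x) =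
      (∫⁻ r in Ioi (0 : ℝ), ENNReal.ofReal (r ^ (finrank ℝ E - 1)) * ψ r) •
        μ.toSphere.map (↑) := by
  have hT : Measurable fun x : E => ‖x‖⁻¹ • x := by fun_prop
  ext s hs
  rw [Measure.map_apply hT hs, withDensity_apply _ (hT hs), Measure.smul_apply,
    Measure.map_apply measurable_subtype_coe hs, smul_eq_mul,
    ← lintegral_indicator (hT hs), ← lintegral_indicator_one (measurable_subtype_coe hs)]
  refine lintegral_eq_lintegral_Ioi_mul_lintegral_toSphere μ hψ
    (measurable_const.indicator (hs.preimage measurable_subtype_coe)) fun r hr θ => ?_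
  by_cases hθs : (θ : E) ∈ s <;>
    simp [indicator, hθs, norm_smul_of_mem_sphere hr, inv_smul_smul₀ hr.ne']

end PolarCoordinates

theorem integral_Ioi_pow_succ_mul_deriv {ρ : ℝ → ℝ} (hρ : ContDiff ℝ 1 ρ)
    (hc : HasCompactSupport ρ) (k : ℕ) :
    ∫ r in Ioi (0 : ℝ), r ^ (k + 1) * deriv ρ r =
      -((k : ℝ) + 1) * ∫ r in Ioi (0 : ℝ), r ^ k * ρ r := by
  have hpow (r : ℝ) : HasDerivAt (· ^ (k + 1)) (((k : ℝ) + 1) * r ^ k) r := by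
    simpa using hasDerivAt_pow (k + 1) r
  have hprod : Continuous fun r : ℝ => r ^ (k + 1) * ρ r := by fun_prop
  have hρ' : Continuous (deriv ρ) := hρ.continuous_deriv le_rfl
  have hibp := integral_Ioi_mul_deriv_eq_deriv_mul (a := 0) (a' := 0) (b' := 0)
    (fun r _ => hpow r) (fun r _ => (hρ.differentiable one_ne_zero r).hasDerivAt)
    ((continuous_pow _ |>.mul hρ').integrable_of_hasCompactSupport hc.deriv.mul_left).integrableOn
    ((by fun_prop : Continuous fun r : ℝ => ((k : ℝ) + 1) * r ^ k * ρ r)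
      |>.integrable_of_hasCompactSupport hc.mul_left).integrableOn
    (show Tendsto (fun r : ℝ => r ^ (k + 1) * ρ r) (𝓝[>] 0) (𝓝 0) by
      simpa using (hprod.tendsto 0).mono_left nhdsWithin_le_nhds)
    ((hc.mul_left.is_zero_at_infty).mono_left atTop_le_cocompact)
  simp only [sub_zero, zero_sub] at hibp
  rw [hibp, ← integral_const_mul, ← integral_neg]
  simp only [neg_mul, mul_assoc]

theorem exists_contDiff_tsupport_subset_Ioi_integral_pos (k : ℕ) :
    ∃ ρ : ℝ → ℝ, ContDiff ℝ 1 ρ ∧ HasCompactSupport ρ ∧ tsupport ρ ⊆ Ioi 0 ∧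
      0 < ∫ r in Ioi (0 : ℝ), r ^ k * ρ r := by
  let ρ : ContDiffBump (2 : ℝ) := ⟨1 / 2, 1, by norm_num, by norm_num⟩
  have hsupp : tsupport ρ ⊆ Ioi 0 := by
    rw [ρ.tsupport_eq, Real.closedBall_eq_Icc]
    exact fun r hr => lt_of_lt_of_le (by norm_num) hr.1
  have hvanish (r : ℝ) (hr : r ∉ Ioi 0) : ρ r = 0 :=
    image_eq_zero_of_notMem_tsupport fun h => hr (hsupp h)
  refine ⟨ρ, ρ.contDiff, ρ.hasCompactSupport, hsupp, ?_⟩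
  rw [setIntegral_eq_integral_of_forall_compl_eq_zero fun r hr => by simp [hvanish r hr]]
  refine Continuous.integral_pos_of_hasCompactSupport_nonneg_nonzero (x := 2)
    ((continuous_pow k).mul ρ.continuous) ρ.hasCompactSupport.mul_left (fun r => ?_) ?_
  · by_cases hr : r ∈ Ioi 0
    · exact mul_nonneg (pow_nonneg (le_of_lt hr) k) ρ.nonneg
    · simp [hvanish r hr]
  · rw [ρ.one_of_mem_closedBall (mem_closedBall_self (by norm_num))]
    positivity

def IsZeroHomogeneous {E F : Type*} [AddCommGroup E] [Module ℝ E] (u : E → F) : Prop :=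
  ∀ r : ℝ, 0 < r → ∀ x : E, x ≠ 0 → u (r • x) = u x

theorem IsZeroHomogeneous.smul_fderiv_smul {E F : Type*} [NormedAddCommGroup E]
    [NormedSpace ℝ E] [NormedAddCommGroup F] [NormedSpace ℝ F] {u : E → F}
    (hu : IsZeroHomogeneous u) {c : ℝ} (hc : 0 < c) {x : E} (hx : x ≠ 0) :
    c • fderiv ℝ u (c • x) = fderiv ℝ u x := by
  rw [← fderiv_comp_smul]
  exact Filter.EventuallyEq.fderiv_eq <| (eventually_ne_nhds hx).mono fun y hy => hu c hc y hy

theorem HasCompactSupport.comp_norm {E F : Type*} [NormedAddCommGroup E] [ProperSpace E]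
    [Zero F] {ρ : ℝ → F} (hρ : HasCompactSupport ρ) : HasCompactSupport fun x : E => ρ ‖x‖ := by
  obtain ⟨R, hR⟩ := hρ.isCompact.isBounded.subset_closedBall 0
  refine HasCompactSupport.intro (isCompact_closedBall (0 : E) R) fun x hx =>
    image_eq_zero_of_notMem_tsupport fun h => hx ?_
  simpa using hR h

theorem integrable_mul_of_tsupport_subset {E : Type*} [TopologicalSpace E] [MeasurableSpace E]
    [OpensMeasurableSpace E] {μ : Measure E} [IsFiniteMeasureOnCompacts μ] {s : Set E}
    (hs : IsOpen s) {φ w : E → ℝ} (hφ : Continuous φ) (hφc : HasCompactSupport φ)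
    (hφs : tsupport φ ⊆ s) (hw : ContinuousOn w s) : Integrable (fun x => φ x * w x) μ :=
  ((hφ.continuousOn.mul hw).continuous_of_tsupport_subset hs
    (tsupport_mul_subset_left.trans hφs)).integrable_of_hasCompactSupport hφc.mul_right

section InnerProductSpace

variable {E : Type*} [NormedAddCommGroup E] [InnerProductSpace ℝ E]

theorem hasFDerivAt_norm_of_ne_zero {x : E} (hx : x ≠ 0) :
    HasFDerivAt (‖·‖) (‖x‖⁻¹ • innerSL ℝ x) x := by
  have hsq := (hasStrictFDerivAt_norm_sq x).hasFDerivAt.sqrt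
    (pow_ne_zero 2 (norm_ne_zero_iff.2 hx))
  simp only [Real.sqrt_sq (norm_nonneg _)] at hsq
  convert hsq using 1
  ext v
  simp only [smul_apply, innerSL_apply_apply, smul_eq_mul, nsmul_eq_mul,
    Nat.cast_ofNat]
  field_simp

theorem contDiff_comp_norm {ρ : ℝ → ℝ} {n : WithTop ℕ∞} (hρ : ContDiff ℝ n ρ)
    (h0 : 0 ∉ tsupport ρ) : ContDiff ℝ n fun x : E => ρ ‖x‖ := by
  refine contDiff_iff_contDiffAt.2 fun x => ?_
  rcases eq_or_ne x 0 with rfl | hx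
  · refine contDiffAt_const (c := (0 : ℝ)).congr_of_eventuallyEq ?_
    have : Tendsto (‖·‖) (𝓝 (0 : E)) (𝓝 0) := by simpa using (continuous_norm.tendsto (0 : E))
    exact this.eventually (notMem_tsupport_iff_eventuallyEq.1 h0)
  · exact hρ.contDiffAt.comp x (contDiffAt_norm ℝ hx)

theorem fderiv_comp_norm_apply {ρ : ℝ → ℝ} {x : E} (hρ : DifferentiableAt ℝ ρ ‖x‖) (hx : x ≠ 0)
    (v : E) : fderiv ℝ (fun y => ρ ‖y‖) x v = deriv ρ ‖x‖ * (‖x‖⁻¹ * ⟪x, v⟫) := by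
  change fderiv ℝ (ρ ∘ (‖·‖)) x v = _
  rw [(hρ.hasDerivAt.comp_hasFDerivAt x (hasFDerivAt_norm_of_ne_zero hx)).fderiv]
  simp

end InnerProductSpace

section CutoffIntegrationByParts

variable {E : Type*} [NormedAddCommGroup E] [InnerProductSpace ℝ E] [FiniteDimensional ℝ E]
  [MeasurableSpace E] [BorelSpace E] {μ : Measure E} [μ.IsAddHaarMeasure]

theorem integral_comp_norm_mul_fderiv_apply {ρ : ℝ → ℝ} (hρ : ContDiff ℝ 1 ρ)
    (hρc : HasCompactSupport ρ) (hρ0 : tsupport ρ ⊆ Ioi 0) {u : E → ℝ}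
    (hu : ContDiffOn ℝ 1 u {0}ᶜ) (v : E) :
    ∫ x, ρ ‖x‖ * fderiv ℝ u x v ∂μ = -∫ x, fderiv ℝ (fun y => ρ ‖y‖) x v * u x ∂μ := by
  set χ : E → ℝ := fun x => ρ ‖x‖
  have hχ : ContDiff ℝ 1 χ := contDiff_comp_norm hρ fun h => lt_irrefl (0 : ℝ) (hρ0 h)
  have hχ0 : tsupport χ ⊆ {0}ᶜ := fun x hx hx0 => by
    have := hρ0 (tsupport_comp_subset_preimage ρ continuous_norm hx)
    simp_all
  have hχ' : tsupport (fderiv ℝ χ · v) ⊆ {0}ᶜ := (tsupport_fderiv_apply_subset ℝ v).trans hχ0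
  have hdu : ContinuousOn (fderiv ℝ u · v) {0}ᶜ :=
    (hu.continuousOn_fderiv_of_isOpen isOpen_compl_singleton le_rfl).clm_apply continuousOn_const
  exact integral_mul_fderiv_eq_neg_fderiv_mul_of_integrable
    (integrable_mul_of_tsupport_subset isOpen_compl_singleton
      ((hχ.continuous_fderiv one_ne_zero).clm_apply continuous_const)
      (hρc.comp_norm.fderiv_apply (𝕜 := ℝ) v) hχ' hu.continuousOn)
    (integrable_mul_of_tsupport_subset isOpen_compl_singleton hχ.continuous hρc.comp_norm hχ0 hdu)
    (integrable_mul_of_tsupport_subset isOpen_compl_singleton hχ.continuous hρc.comp_norm hχ0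
      hu.continuousOn)
    (fun x _ => hχ.differentiable one_ne_zero x)
    (fun x hx => (hu.differentiableOn one_ne_zero).differentiableAt
      (isOpen_compl_singleton.mem_nhds (hχ0 hx)))

end CutoffIntegrationByParts

section ZeroHomogeneous

variable {E : Type*} [NormedAddCommGroup E] [InnerProductSpace ℝ E] [FiniteDimensional ℝ E]
  [MeasurableSpace E] [BorelSpace E] (μ : Measure E) [μ.IsAddHaarMeasure]

theorem IsZeroHomogeneous.integral_toSphere_fderiv_apply {u : E → ℝ}
    (hu : ContDiffOn ℝ 1 u {0}ᶜ) (huh : IsZeroHomogeneous u) (hd : 2 ≤ finrank ℝ E) (v : E) :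
    ∫ θ, fderiv ℝ u θ v ∂μ.toSphere =
      ((finrank ℝ E : ℝ) - 1) * ∫ θ, u θ * ⟪(θ : E), v⟫ ∂μ.toSphere := by
  have : Nontrivial E := Module.nontrivial_of_finrank_pos (R := ℝ) (by omega)
  obtain ⟨k, hk⟩ : ∃ k, finrank ℝ E = k + 2 := ⟨_, (Nat.sub_add_cancel hd).symm⟩
  obtain ⟨ρ, hρ, hρc, hρ0, hpos⟩ := exists_contDiff_tsupport_subset_Ioi_integral_pos k
  have hibp := integral_comp_norm_mul_fderiv_apply (μ := μ) hρ hρc hρ0 hu v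
  have hθ (θ : sphere (0 : E) 1) : (θ : E) ≠ 0 := ne_of_mem_sphere θ.2 one_ne_zero
  have hpolar₁ : ∫ x, ρ ‖x‖ * fderiv ℝ u x v ∂μ =
      (∫ r in Ioi (0 : ℝ), r ^ k * ρ r) * ∫ θ, fderiv ℝ u θ v ∂μ.toSphere := by
    have hsep (r : ℝ) (hr : 0 < r) (θ : sphere (0 : E) 1) :
        ρ ‖r • (θ : E)‖ * fderiv ℝ u (r • (θ : E)) v = (r⁻¹ * ρ r) • fderiv ℝ u θ v := by
      rw [← huh.smul_fderiv_smul hr (hθ θ), norm_smul_of_mem_sphere hr]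
      simp only [smul_apply, smul_eq_mul]
      field_simp
    rw [integral_eq_integral_Ioi_smul_integral_toSphere μ hsep, hk, smul_eq_mul]
    congr 1
    refine setIntegral_congr_fun measurableSet_Ioi fun r (hr : 0 < r) => ?_
    rw [show k + 2 - 1 = k + 1 from rfl, pow_succ]
    field_simp
  have hpolar₂ : ∫ x, fderiv ℝ (fun y => ρ ‖y‖) x v * u x ∂μ =
      (∫ r in Ioi (0 : ℝ), r ^ (k + 1) * deriv ρ r) * ∫ θ, u θ * ⟪(θ : E), v⟫ ∂μ.toSphere := by
    have hsep (r : ℝ) (hr : 0 < r) (θ : sphere (0 : E) 1) :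
        fderiv ℝ (fun y => ρ ‖y‖) (r • (θ : E)) v * u (r • (θ : E)) =
          deriv ρ r • (u θ * ⟪(θ : E), v⟫) := by
      rw [fderiv_comp_norm_apply (hρ.differentiable one_ne_zero _) (smul_ne_zero hr.ne' (hθ θ)),
        norm_smul_of_mem_sphere hr, huh r hr θ (hθ θ), real_inner_smul_left, smul_eq_mul]
      field_simp
    rw [integral_eq_integral_Ioi_smul_integral_toSphere μ hsep, hk, smul_eq_mul]
    rfl
  rw [hpolar₁, hpolar₂, integral_Ioi_pow_succ_mul_deriv hρ hρc k] at hibp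
  rw [hk]
  push_cast
  refine mul_left_cancel₀ hpos.ne' ?_
  linear_combination hibp

theorem IsZeroHomogeneous.integral_toSphere_gradient {u : E → ℝ}
    (hu : ContDiffOn ℝ 1 u {0}ᶜ) (huh : IsZeroHomogeneous u) (hd : 2 ≤ finrank ℝ E) :
    ∫ θ, gradient u θ ∂μ.toSphere = ((finrank ℝ E : ℝ) - 1) • ∫ θ, u θ • (θ : E) ∂μ.toSphere := by
  have hθ (θ : sphere (0 : E) 1) : (θ : E) ∈ ({0}ᶜ : Set E) := ne_of_mem_sphere θ.2 one_ne_zero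
  have hgrad : ContinuousOn (gradient u) {0}ᶜ :=
    (InnerProductSpace.toDual ℝ E).symm.continuous.comp_continuousOn
      (hu.continuousOn_fderiv_of_isOpen isOpen_compl_singleton le_rfl)
  have hint {f : E → E} (hf : ContinuousOn f {0}ᶜ) :
      Integrable (fun θ : sphere (0 : E) 1 => f θ) μ.toSphere :=
    (hf.comp_continuous continuous_subtype_val hθ).integrable_of_hasCompactSupport
      (HasCompactSupport.of_compactSpace _)
  refine ext_inner_left ℝ fun v => ?_
  rw [← integral_inner (hint hgrad), inner_smul_right, ← integral_inner
    (hint (f := fun x => u x • x) (hu.continuousOn.smul continuousOn_id))]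
  simp only [inner_gradient_right, conj_trivial, real_inner_smul_right]
  simp_rw [huh.integral_toSphere_fderiv_apply μ hu hd v, real_inner_comm v]

end ZeroHomogeneous

theorem integral_sphereUniform {n : ℕ} (hn : n ≠ 0) {G : Type*} [NormedAddCommGroup G]
    [NormedSpace ℝ G] (f : EuclideanSpace ℝ (Fin n) → G) :
    ∫ θ, f θ ∂sphereUniform n =
      (∫⁻ r in Ioi (0 : ℝ), ENNReal.ofReal (r ^ (n - 1)) *
        ENNReal.ofReal ((2 * π) ^ (-(n : ℝ) / 2) * Real.exp (-r ^ 2 / 2))).toReal •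
      ∫ θ, f θ ∂(volume : Measure (EuclideanSpace ℝ (Fin n))).toSphere := by
  have : Nontrivial (EuclideanSpace ℝ (Fin n)) :=
    Module.nontrivial_of_finrank_pos (R := ℝ) (by simp [Nat.pos_of_ne_zero hn])
  rw [sphereUniform, stdGaussian, map_inv_norm_smul_withDensity_comp_norm volume
    (ψ := fun r => ENNReal.ofReal ((2 * π) ^ (-(n : ℝ) / 2) * Real.exp (-r ^ 2 / 2)))
    (by fun_prop), finrank_euclideanSpace_fin, integral_smul_measure,
    (MeasurableEmbedding.subtype_coe (isClosed_sphere.measurableSet)).integral_map]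

/-- For a `C¹` 0-homogeneous `u` (whose gradient on the sphere is the spherical
gradient of its restriction `f`):
`∫ f(θ) θ dσ_{n-1} = (1/(n-1)) ∫ ∇_S f(θ) dσ_{n-1}` as vectors in `ℝⁿ`. -/
theorem statement12 (n : ℕ) (hn : 2 ≤ n) (u : EuclideanSpace ℝ (Fin n) → ℝ)
    (hu : ContDiffOn ℝ 1 u {(0 : EuclideanSpace ℝ (Fin n))}ᶜ)
    (huh : ∀ r : ℝ, 0 < r → ∀ x : EuclideanSpace ℝ (Fin n), x ≠ 0 → u (r • x) = u x) :
    (∫ θ, u θ • θ ∂(sphereUniform n)) =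
      (((n : ℝ) - 1)⁻¹) • ∫ θ, gradient u θ ∂(sphereUniform n) := by
  have hd : 2 ≤ finrank ℝ (EuclideanSpace ℝ (Fin n)) := by simpa using hn
  have hn1 : (n : ℝ) - 1 ≠ 0 := by
    have : (2 : ℝ) ≤ n := by exact_mod_cast hn
    linarith
  rw [integral_sphereUniform (by omega), integral_sphereUniform (by omega),
    IsZeroHomogeneous.integral_toSphere_gradient volume hu huh hd, finrank_euclideanSpace_fin,
    smul_comm, inv_smul_smul₀ hn1]
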